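/- Existence of macroscopic s-sets: Let E ⊂ ℝ^d with ν^s(E) = Σ_n ν_n^s(E) = +∞. Then there exists a subset Ẽ ⊂ E such that Dim_H(Ẽ) = s and ν^s(Ẽ) < +∞. -/

import Mathlib

open Metric Set ENNReal MeasureTheory

noncomputable def shell (X : Type*) [NormedAddCommGroup X] (n : ℕ) : Set X :=
  if n = 0 then Metric.ball 0 1 else Metric.ball 0 ((2:ℝ)^n) \ Metric.ball 0 ((2:ℝ)^(n-1))

noncomputable def nuT {X : Type*} [NormedAddCommGroup X] (s : ℝ) (n : ℕ) (E : Set X) : ℝ≥0∞ :=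
  sInf { t : ℝ≥0∞ | ∃ (m : ℕ) (x : Fin m → X) (r : Fin m → ℝ),
    (∀ i, x i ∈ shell X n) ∧ (∀ i, 1 ≤ r i) ∧
    (E ∩ shell X n ⊆ ⋃ i, Metric.ball (x i) (r i)) ∧
    t = ∑ i, ENNReal.ofReal ((r i / 2^n)^s) }

noncomputable def macroDim {X : Type*} [NormedAddCommGroup X] (E : Set X) : ℝ :=
  sInf { s : ℝ | 0 ≤ s ∧ ∑' n, nuT s n E < ⊤ }

def IsIntegerPoint {d : ℕ} (x : EuclideanSpace ℝ (Fin d)) : Prop := ∀ j, ∃ z : ℤ, x j = (z : ℝ)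

def IsProperCover {d : ℕ} (n : ℕ) (E : Set (EuclideanSpace ℝ (Fin d))) {m : ℕ}
    (x : Fin m → EuclideanSpace ℝ (Fin d)) (r : Fin m → ℕ) : Prop :=
  (∀ i, x i ∈ shell (EuclideanSpace ℝ (Fin d)) n) ∧ (∀ i, IsIntegerPoint (x i)) ∧
  (∀ i, 1 ≤ r i) ∧ (E ∩ shell (EuclideanSpace ℝ (Fin d)) n ⊆ ⋃ i, Metric.ball (x i) ((r i : ℝ)))

noncomputable def nuP {d : ℕ} (s : ℝ) (n : ℕ) (E : Set (EuclideanSpace ℝ (Fin d))) : ℝ≥0∞ :=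
  sInf { t : ℝ≥0∞ | ∃ (m : ℕ) (x : Fin m → EuclideanSpace ℝ (Fin d)) (r : Fin m → ℕ),
    IsProperCover n E x r ∧ t = ∑ i, ENNReal.ofReal (((r i : ℝ) / 2^n)^s) }

open scoped NNReal

/-!
Write `a n = ν_n^s(E)`, a sequence of finite numbers with divergent sum. Cut `ℕ` into consecutive
blocks on which `a` has mass at least `1`, and fix weights `w k ≤ 1` with `∑ w k < ∞` but
`∑ (w k) ^ θ = ∞` for every `θ < 1`. Rescaling `a` on the `k`-th block to total mass `w k` gives
`l ≤ a` with `∑ l < ∞` and `∑ l ^ θ = ∞`, because `x ↦ x ^ θ` is subadditive.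

In a shell `S_n` far enough out, every point lies within `√d` of an integer point of `S_n`, so
`S_n` is covered by finitely many proper balls of radius `d + 1`. Adding these balls to `E ∩ S_n`
one at a time raises `ν_n^s` by at most `((d + 1) / 2 ^ n) ^ s` per step, so some `G_n ⊆ E ∩ S_n`
has `ν_n^s(G_n)` between `l n` and `l n + ((d + 1) / 2 ^ n) ^ s`. The union `F` of the `G_n` has
`ν^s(F) < ∞`, while for `t < s` subadditivity of `x ↦ x ^ (t / s)` over covers gives
`ν_n^t(F) ≥ ν_n^s(F) ^ (t / s) ≥ l n ^ (t / s)`, whence `ν^t(F) = ∞`.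
-/

lemma rpow_sum_le_sum_rpow {ι : Type*} (S : Finset ι) (f : ι → ℝ≥0∞) {θ : ℝ} (h0 : 0 < θ)
    (h1 : θ ≤ 1) : (∑ i ∈ S, f i) ^ θ ≤ ∑ i ∈ S, f i ^ θ := by
  induction S using Finset.cons_induction with
  | empty => simp [ENNReal.zero_rpow_of_pos h0]
  | cons a S ha ih =>
    rw [Finset.sum_cons, Finset.sum_cons]
    exact (ENNReal.rpow_add_le_add_rpow _ _ h0.le h1).trans (by gcongr)

lemma tsum_coe_natCast_rpow_neg_ne_top_iff {r : ℝ} :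
    ∑' i : ℕ, (((i : ℝ≥0) ^ (-r) : ℝ≥0) : ℝ≥0∞) ≠ ⊤ ↔ 1 < r := by
  rw [ENNReal.tsum_coe_ne_top_iff_summable, NNReal.summable_rpow, neg_lt_neg_iff]

lemma exists_nat_one_add_inv_mul_le_one {θ : ℝ} (hθ : θ < 1) :
    ∃ q : ℕ, (1 + 1 / (q + 1)) * θ ≤ 1 := by
  obtain ⟨q, hq⟩ := exists_nat_gt (θ / (1 - θ))
  refine ⟨q, ?_⟩
  rw [div_lt_iff₀ (by linarith)] at hq
  have : θ ≤ (1 - θ) * (q + 1) := by nlinarith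
  rw [add_mul, one_mul, one_div_mul_eq_div, ← le_sub_iff_add_le', div_le_iff₀ (by positivity)]
  linarith

lemma exists_weights_tsum_ne_top_tsum_rpow_eq_top :
    ∃ w : ℕ → ℝ≥0∞, (∀ k, w k ≤ 1) ∧ ∑' k, w k ≠ ⊤ ∧
      ∀ θ : ℝ, 0 < θ → θ < 1 → ∑' k, w k ^ θ = ⊤ := by
  -- Row `q` is the `p`-series with exponent `1 + 1 / (q + 1)`, normalised to total mass `2⁻¹ ^ q`;
  -- rows are enumerated along `Nat.pairEquiv`.
  let p : ℕ → ℝ := fun q => 1 + 1 / (q + 1)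
  let u : ℕ → ℕ → ℝ≥0∞ := fun q i => ((i : ℝ≥0) ^ (-p q) : ℝ≥0)
  have hu : ∀ q, ∑' i, u q i ≠ ⊤ := fun q =>
    tsum_coe_natCast_rpow_neg_ne_top_iff.2 (lt_add_of_pos_right _ (by positivity))
  have hu1 : ∀ q, 1 ≤ ∑' i, u q i := fun q => by
    simpa [u] using ENNReal.le_tsum (f := u q) 1
  let c : ℕ → ℝ≥0∞ := fun q => 2⁻¹ ^ q / ∑' i, u q i
  have hrow : ∀ q, ∑' i, c q * u q i = 2⁻¹ ^ q := fun q => by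
    rw [ENNReal.tsum_mul_left, ENNReal.div_mul_cancel (one_pos.trans_le (hu1 q)).ne' (hu q)]
  let w : ℕ × ℕ → ℝ≥0∞ := fun x => c x.1 * u x.1 x.2
  refine ⟨fun k => w (Nat.pairEquiv.symm k), fun k => ?_, ?_, fun θ h0 h1 => ?_⟩
  · calc w (Nat.pairEquiv.symm k) ≤ ∑' i, c (Nat.pairEquiv.symm k).1 * u _ i :=
          ENNReal.le_tsum (f := fun i => c _ * u _ i) _
      _ ≤ 1 := (hrow _).trans_le (pow_le_one₀ zero_le (ENNReal.inv_le_one.2 one_le_two))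
  · rw [Nat.pairEquiv.symm.tsum_eq w, ENNReal.tsum_prod']
    simp only [w]
    rw [tsum_congr hrow, ENNReal.tsum_geometric_two]
    exact ENNReal.ofNat_ne_top
  · obtain ⟨q, hq⟩ := exists_nat_one_add_inv_mul_le_one h1
    have hc : c q ^ θ ≠ 0 := (ENNReal.rpow_pos (ENNReal.div_pos (by simp) (hu q))
      (ENNReal.div_ne_top (by simp) (one_pos.trans_le (hu1 q)).ne')).ne'
    have hrowθ : ∑' i, (c q * u q i) ^ θ = ⊤ := by
      simp_rw [ENNReal.mul_rpow_of_nonneg _ _ h0.le, ENNReal.tsum_mul_left]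
      simp only [u]
      simp_rw [← ENNReal.coe_rpow_of_nonneg _ h0.le, ← NNReal.rpow_mul, neg_mul]
      rw [not_ne_iff.1 (mt tsum_coe_natCast_rpow_neg_ne_top_iff.1 hq.not_gt), ENNReal.mul_top hc]
    rw [Nat.pairEquiv.symm.tsum_eq (fun x => w x ^ θ), ENNReal.tsum_prod', eq_top_iff, ← hrowθ]
    exact ENNReal.le_tsum (f := fun a => ∑' b, w (a, b) ^ θ) q

lemma exists_lt_one_le_sum_Ico {a : ℕ → ℝ≥0∞} (ha : ∀ n, a n ≠ ⊤) (h : ∑' n, a n = ⊤)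
    (N : ℕ) : ∃ M, N < M ∧ 1 ≤ ∑ n ∈ Finset.Ico N M, a n := by
  have htail : ∑' n, a (n + N) = ⊤ := by
    have := (ENNReal.summable (f := fun n => a (n + N))).hasSum.sum_range_add.tsum_eq
    rw [h] at this
    exact (ENNReal.add_eq_top.1 this.symm).resolve_left (ENNReal.sum_ne_top.2 fun n _ => ha n)
  rw [ENNReal.tsum_eq_iSup_nat] at htail
  obtain ⟨K, hK⟩ := lt_iSup_iff.1 (htail ▸ ENNReal.one_lt_top)
  refine ⟨N + K, Nat.lt_add_of_pos_right (Nat.pos_of_ne_zero ?_), ?_⟩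
  · rintro rfl
    simp at hK
  · rw [Finset.sum_Ico_eq_sum_range, Nat.add_sub_cancel_left]
    simpa only [add_comm N] using hK.le

lemma exists_strictMono_one_le_sum_Ico {a : ℕ → ℝ≥0∞} (ha : ∀ n, a n ≠ ⊤)
    (h : ∑' n, a n = ⊤) : ∃ m : ℕ → ℕ, StrictMono m ∧ m 0 = 0 ∧
      ∀ k, 1 ≤ ∑ n ∈ Finset.Ico (m k) (m (k + 1)), a n := by
  choose next hnext using exists_lt_one_le_sum_Ico ha h
  refine ⟨fun k => next^[k] 0, strictMono_nat_of_lt_succ fun k => ?_, rfl, fun k => ?_⟩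
  · simpa only [Function.iterate_succ_apply'] using (hnext _).1
  · simpa only [Function.iterate_succ_apply'] using (hnext _).2

lemma tsum_eq_tsum_sum_Ico {m : ℕ → ℕ} (hm : StrictMono m) (h0 : m 0 = 0) (f : ℕ → ℝ≥0∞) :
    ∑' n, f n = ∑' k, ∑ n ∈ Finset.Ico (m k) (m (k + 1)), f n := by
  have hpartial : ∀ K, ∑ n ∈ Finset.range (m K), f n =
      ∑ k ∈ Finset.range K, ∑ n ∈ Finset.Ico (m k) (m (k + 1)), f n := by
    intro K
    induction K with
    | zero => simp [h0]
    | succ K ih =>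
      rw [Finset.sum_range_succ, ← ih, Finset.sum_range_add_sum_Ico _ (hm.monotone K.le_succ)]
  rw [ENNReal.tsum_eq_iSup_nat' hm.tendsto_atTop, ENNReal.tsum_eq_iSup_nat]
  simp_rw [hpartial]

lemma exists_blockIndex {m : ℕ → ℕ} (hm : StrictMono m) (h0 : m 0 = 0) :
    ∃ β : ℕ → ℕ, ∀ n k, β n = k ↔ n ∈ Finset.Ico (m k) (m (k + 1)) := by
  classical
  have hex : ∀ n, ∃ k, n < m (k + 1) := fun n => ⟨n, (hm.id_le n).trans_lt (hm n.lt_succ_self)⟩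
  refine ⟨fun n => Nat.find (hex n), fun n k => ?_⟩
  rw [Finset.mem_Ico, Nat.find_eq_iff]
  constructor
  · rintro ⟨hlt, hmin⟩
    refine ⟨?_, hlt⟩
    cases k with
    | zero => simp [h0]
    | succ j => exact not_lt.1 (hmin j j.lt_succ_self)
  · rintro ⟨hle, hlt⟩
    exact ⟨hlt, fun j hj => not_lt.2 ((hm.monotone (Nat.succ_le_of_lt hj)).trans hle)⟩

theorem exists_le_tsum_ne_top_tsum_rpow_eq_top {a : ℕ → ℝ≥0∞} (ha : ∀ n, a n ≠ ⊤)
    (h : ∑' n, a n = ⊤) : ∃ l : ℕ → ℝ≥0∞, l ≤ a ∧ l ≤ 1 ∧ ∑' n, l n ≠ ⊤ ∧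
      ∀ θ : ℝ, 0 < θ → θ < 1 → ∑' n, l n ^ θ = ⊤ := by
  obtain ⟨w, hw1, hw, hwθ⟩ := exists_weights_tsum_ne_top_tsum_rpow_eq_top
  obtain ⟨m, hm, hm0, hS1⟩ := exists_strictMono_one_le_sum_Ico ha h
  obtain ⟨β, hβ⟩ := exists_blockIndex hm hm0
  set S : ℕ → ℝ≥0∞ := fun k => ∑ n ∈ Finset.Ico (m k) (m (k + 1)), a n
  have hS : ∀ k, S k ≠ ⊤ := fun k => ENNReal.sum_ne_top.2 fun n _ => ha n
  -- on the `k`-th block, `l` is `a` rescaled to total mass `w k`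
  set l : ℕ → ℝ≥0∞ := fun n => w (β n) / S (β n) * a n
  have hblock : ∀ k, ∑ n ∈ Finset.Ico (m k) (m (k + 1)), l n = w k := fun k => by
    rw [Finset.sum_congr rfl fun n hn => show l n = w k / S k * a n by simp only [l, (hβ n k).2 hn],
      ← Finset.mul_sum,
      ENNReal.div_mul_cancel (one_pos.trans_le (hS1 k)).ne' (hS k)]
  refine ⟨l, fun n => ?_, fun n => ?_, ?_, fun θ h0 h1 => ?_⟩
  · exact mul_le_of_le_one_left' (ENNReal.div_le_of_le_mul (by
      rw [one_mul]; exact (hw1 _).trans (hS1 _)))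
  · calc l n ≤ ∑ n ∈ Finset.Ico (m (β n)) (m (β n + 1)), l n :=
          Finset.single_le_sum (fun _ _ => zero_le) ((hβ n (β n)).1 rfl)
      _ = w (β n) := hblock _
      _ ≤ 1 := hw1 _
  · rwa [tsum_eq_tsum_sum_Ico hm hm0, tsum_congr hblock]
  · rw [tsum_eq_tsum_sum_Ico hm hm0, eq_top_iff, ← hwθ θ h0 h1]
    exact ENNReal.tsum_le_tsum fun k => hblock k ▸ rpow_sum_le_sum_rpow _ _ h0 h1.le

lemma tsum_nat_add_ne_top_iff {f : ℕ → ℝ≥0∞} (hf : ∀ n, f n ≠ ⊤) (k : ℕ) :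
    ∑' n, f (n + k) ≠ ⊤ ↔ ∑' n, f n ≠ ⊤ := by
  rw [(ENNReal.summable (f := fun n => f (n + k))).hasSum.sum_range_add.tsum_eq,
    ENNReal.add_ne_top, and_iff_right (ENNReal.sum_ne_top.2 fun n _ => hf n)]

lemma tsum_ofReal_div_two_pow_rpow_ne_top {R s : ℝ} (hR : 0 ≤ R) (hs : 0 < s) :
    ∑' n : ℕ, ENNReal.ofReal ((R / 2 ^ n) ^ s) ≠ ⊤ := by
  have hr : ((2 : ℝ) ^ s)⁻¹ < 1 := inv_lt_one_of_one_lt₀ (Real.one_lt_rpow one_lt_two hs)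
  have heq : ∀ n : ℕ, (R / 2 ^ n) ^ s = R ^ s * ((2 : ℝ) ^ s)⁻¹ ^ n := fun n => by
    rw [Real.div_rpow hR (by positivity), div_eq_mul_inv, inv_pow, Real.rpow_pow_comm zero_le_two]
  simp_rw [heq]
  rw [← ENNReal.ofReal_tsum_of_nonneg (fun n => by positivity)
    ((summable_geometric_of_lt_one (by positivity) hr).mul_left _)]
  exact ENNReal.ofReal_ne_top

section Shell

variable {X : Type*} [NormedAddCommGroup X]

lemma norm_lt_of_mem_shell {n : ℕ} {x : X} (hx : x ∈ shell X n) : ‖x‖ < 2 ^ n := by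
  unfold shell at hx
  split_ifs at hx with h
  · subst h
    simpa using hx
  · exact mem_ball_zero_iff.1 hx.1

lemma mem_shell_succ {k : ℕ} {x : X} : x ∈ shell X (k + 1) ↔ 2 ^ k ≤ ‖x‖ ∧ ‖x‖ < 2 ^ (k + 1) := by
  simp [shell, and_comm]

lemma pairwise_disjoint_shell : Pairwise fun m n => Disjoint (shell X m) (shell X n) := by
  intro m n hmn
  wlog h : m < n generalizing m n
  · exact (this hmn.symm (lt_of_le_of_ne (not_lt.1 h) hmn.symm)).symm
  obtain ⟨k, rfl⟩ := Nat.exists_eq_add_one_of_ne_zero (Nat.ne_zero_of_lt h)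
  refine Set.disjoint_left.2 fun x hm hn => ?_
  have h1 := norm_lt_of_mem_shell hm
  have h2 := (mem_shell_succ.1 hn).1
  have h3 : (2 : ℝ) ^ m ≤ 2 ^ k := pow_le_pow_right₀ one_le_two (by omega)
  linarith

end Shell

section Euclidean

variable {ι : Type*} [Fintype ι]

lemma EuclideanSpace.norm_le_norm_of_abs_le {x y : EuclideanSpace ℝ ι} (h : ∀ j, |x j| ≤ |y j|) :
    ‖x‖ ≤ ‖y‖ := by
  rw [EuclideanSpace.norm_eq, EuclideanSpace.norm_eq]
  gcongr with j
  exact h j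

lemma EuclideanSpace.dist_le_sqrt_card {x y : EuclideanSpace ℝ ι} (h : ∀ j, |x j - y j| ≤ 1) :
    dist x y ≤ √(Fintype.card ι) := by
  rw [EuclideanSpace.dist_eq]
  gcongr
  calc ∑ j, dist (x j) (y j) ^ 2 ≤ ∑ _j : ι, (1 : ℝ) := by
        gcongr with j
        rw [Real.dist_eq, sq_le_one_iff_abs_le_one, abs_abs]
        exact h j
    _ = Fintype.card ι := by simp

end Euclidean

lemma exists_int_abs_le_abs_sub_le_one (x : ℝ) : ∃ z : ℤ, |(z : ℝ)| ≤ |x| ∧ |x - z| ≤ 1 := by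
  wlog hx : 0 ≤ x generalizing x
  · obtain ⟨z, h1, h2⟩ := this (-x) (by linarith)
    refine ⟨-z, by simpa using h1, ?_⟩
    rw [← abs_neg]
    simpa [neg_add_eq_sub] using h2
  refine ⟨⌊x⌋, ?_, ?_⟩
  · rw [abs_of_nonneg hx, abs_of_nonneg (Int.cast_nonneg (Int.floor_nonneg.2 hx))]
    exact Int.floor_le x
  · rw [abs_of_nonneg (sub_nonneg.2 (Int.floor_le x))]
    linarith [Int.lt_floor_add_one x]

lemma exists_int_abs_ge_abs_sub_le_one (x : ℝ) : ∃ z : ℤ, |x| ≤ |(z : ℝ)| ∧ |x - z| ≤ 1 := by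
  wlog hx : 0 ≤ x generalizing x
  · obtain ⟨z, h1, h2⟩ := this (-x) (by linarith)
    refine ⟨-z, by simpa using h1, ?_⟩
    rw [← abs_neg]
    simpa [neg_add_eq_sub] using h2
  refine ⟨⌈x⌉, ?_, ?_⟩
  · rw [abs_of_nonneg hx, abs_of_nonneg (hx.trans (Int.le_ceil x))]
    exact Int.le_ceil x
  · rw [abs_sub_comm, abs_of_nonneg (sub_nonneg.2 (Int.le_ceil x))]
    linarith [Int.ceil_lt_add_one x]

namespace Macroscopic

variable {d : ℕ} {s t : ℝ} {n : ℕ} {A B E : Set (EuclideanSpace ℝ (Fin d))}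

local notation "𝔼" => EuclideanSpace ℝ (Fin d)
local notation "𝕊" => shell (EuclideanSpace ℝ (Fin d))

lemma nuP_inter_shell : nuP s n (A ∩ 𝕊 n) = nuP s n A := by
  simp only [nuP, IsProperCover, inter_assoc, inter_self]

lemma nuP_mono (h : A ⊆ B) : nuP s n A ≤ nuP s n B :=
  sInf_le_sInf fun _ ⟨m, x, r, ⟨h1, h2, h3, h4⟩, ht⟩ =>
    ⟨m, x, r, ⟨h1, h2, h3, (inter_subset_inter_left _ h).trans h4⟩, ht⟩

lemma nuP_empty : nuP s n (∅ : Set 𝔼) = 0 :=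
  nonpos_iff_eq_zero.1 <| sInf_le
    ⟨0, finZeroElim, finZeroElim, ⟨finZeroElim, finZeroElim, finZeroElim, by simp⟩, by simp⟩

lemma nonempty_inter_shell_of_nuP_ne_zero (h : nuP s n A ≠ 0) : (A ∩ 𝕊 n).Nonempty := by
  contrapose! h
  rw [← nuP_inter_shell, h, nuP_empty]

lemma one_le_nuP_zero (h : (A ∩ 𝕊 n).Nonempty) : 1 ≤ nuP 0 n A := by
  refine le_sInf ?_
  rintro _ ⟨m, x, r, ⟨-, -, -, hcov⟩, rfl⟩
  obtain ⟨i, -⟩ := mem_iUnion.1 (hcov h.some_mem)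
  simp only [Real.rpow_zero, ENNReal.ofReal_one, Finset.sum_const, Finset.card_univ,
    Fintype.card_fin, nsmul_eq_mul, mul_one]
  exact Nat.one_le_cast.2 (Fin.pos i)

lemma nuP_union_ball_le {q : 𝔼} {R : ℕ} (hq : q ∈ 𝕊 n) (hqi : IsIntegerPoint q) (hR : 1 ≤ R) :
    nuP s n (A ∪ ball q R) ≤ nuP s n A + ENNReal.ofReal ((R / 2 ^ n) ^ s) := by
  unfold nuP
  rw [ENNReal.sInf_add]
  refine le_iInf₂ fun _ ⟨m, x, r, ⟨h1, h2, h3, h4⟩, hu⟩ => sInf_le ⟨m + 1, Fin.cons q x,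
    Fin.cons R r, ⟨Fin.cases hq h1, Fin.cases hqi h2, Fin.cases hR h3, ?_⟩, ?_⟩
  · rintro p ⟨hpA | hpq, hps⟩
    · obtain ⟨i, hi⟩ := mem_iUnion.1 (h4 ⟨hpA, hps⟩)
      exact mem_iUnion.2 ⟨i.succ, by simpa using hi⟩
    · exact mem_iUnion.2 ⟨0, by simpa using hpq⟩
  · rw [hu, Fin.sum_univ_succ, add_comm]
    simp

lemma nuP_rpow_le_nuP (ht : 0 < t) (hts : t ≤ s) : nuP s n A ^ (t / s) ≤ nuP t n A := by
  have hs := ht.trans_le hts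
  have hθ : 0 < t / s := div_pos ht hs
  refine le_sInf ?_
  rintro _ ⟨m, x, r, hcov, rfl⟩
  calc nuP s n A ^ (t / s) ≤ (∑ i, ENNReal.ofReal ((r i / 2 ^ n) ^ s)) ^ (t / s) :=
        ENNReal.rpow_le_rpow (sInf_le ⟨m, x, r, hcov, rfl⟩) hθ.le
    _ ≤ ∑ i, ENNReal.ofReal ((r i / 2 ^ n) ^ s) ^ (t / s) :=
        rpow_sum_le_sum_rpow _ _ hθ ((div_le_one hs).2 hts)
    _ = ∑ i, ENNReal.ofReal ((r i / 2 ^ n) ^ t) := by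
        refine Finset.sum_congr rfl fun i _ => ?_
        rw [ENNReal.ofReal_rpow_of_nonneg (by positivity) hθ.le, ← Real.rpow_mul (by positivity),
          mul_div_cancel₀ _ hs.ne']

lemma exists_rpow_le_nuP (ht : 0 ≤ t) (hts : t < s) : ∃ θ : ℝ, 0 < θ ∧ θ < 1 ∧
    ∀ (n : ℕ) (A : Set 𝔼) (x : ℝ≥0∞), x ≤ 1 → x ≤ nuP s n A → x ^ θ ≤ nuP t n A := by
  rcases ht.eq_or_lt with rfl | ht
  · -- `ν_n⁰` counts balls, so any exponent works once `A ∩ S_n` is nonempty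
    refine ⟨1 / 2, by norm_num, by norm_num, fun n A x hx1 hx => ?_⟩
    rcases eq_or_ne x 0 with rfl | hx0
    · simp
    · exact (ENNReal.rpow_le_one hx1 (by norm_num)).trans
        (one_le_nuP_zero (nonempty_inter_shell_of_nuP_ne_zero (ne_bot_of_le_ne_bot hx0 hx)))
  · have hs := ht.trans hts
    exact ⟨t / s, div_pos ht hs, (div_lt_one hs).2 hts, fun n A x _ hx =>
      (ENNReal.rpow_le_rpow hx (div_pos ht hs).le).trans (nuP_rpow_le_nuP ht hts.le)⟩

lemma nuP_ne_top_of_mem_shell {q : 𝔼} (hq : q ∈ 𝕊 n) (hqi : IsIntegerPoint q) : nuP s n A ≠ ⊤ := by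
  refine ne_top_of_le_ne_top (ENNReal.sum_ne_top.2 fun _ _ => ENNReal.ofReal_ne_top)
    (sInf_le ⟨1, fun _ => q, fun _ => 2 ^ (n + 1), ⟨fun _ => hq, fun _ => hqi,
      fun _ => Nat.one_le_two_pow, fun p hp => mem_iUnion.2 ⟨0, ?_⟩⟩, rfl⟩)
  have hp := norm_lt_of_mem_shell hp.2
  have hq := norm_lt_of_mem_shell hq
  rw [mem_ball, dist_eq_norm]
  push_cast
  calc ‖p - q‖ ≤ ‖p‖ + ‖q‖ := norm_sub_le _ _
    _ < 2 ^ n + 2 ^ n := by linarith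
    _ = 2 ^ (n + 1) := by ring

lemma exists_isIntegerPoint_mem_shell {p : 𝔼} (hp : p ∈ 𝕊 n) : ∃ q, IsIntegerPoint q ∧ q ∈ 𝕊 n := by
  cases n with
  | zero => exact ⟨0, fun _ => ⟨0, by simp⟩, by simp [shell]⟩
  | succ k =>
    obtain ⟨i⟩ : Nonempty (Fin d) := by
      by_contra h
      have := (mem_shell_succ.1 hp).1
      rw [not_nonempty_iff] at h
      rw [Subsingleton.elim p 0, norm_zero] at this
      exact (pow_pos two_pos k).not_ge this
    refine ⟨EuclideanSpace.single i (2 ^ k), fun j => ⟨if j = i then 2 ^ k else 0, ?_⟩,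
      mem_shell_succ.2 ?_⟩
    · rw [PiLp.single_apply]
      split_ifs <;> simp
    · rw [PiLp.norm_single, Real.norm_of_nonneg (by positivity), pow_succ]
      exact ⟨le_rfl, by linarith [pow_pos (two_pos : (0 : ℝ) < 2) k]⟩

lemma nuP_ne_top (s : ℝ) (n : ℕ) (A : Set 𝔼) : nuP s n A ≠ ⊤ := by
  rcases (A ∩ 𝕊 n).eq_empty_or_nonempty with h | ⟨p, -, hp⟩
  · rw [← nuP_inter_shell, h, nuP_empty]
    exact ENNReal.zero_ne_top
  · obtain ⟨q, hqi, hq⟩ := exists_isIntegerPoint_mem_shell hp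
    exact nuP_ne_top_of_mem_shell hq hqi

lemma exists_isIntegerPoint_norm_le (p : 𝔼) :
    ∃ q, IsIntegerPoint q ∧ ‖q‖ ≤ ‖p‖ ∧ dist p q ≤ √d := by
  choose z hz using fun j => exists_int_abs_le_abs_sub_le_one (p j)
  refine ⟨WithLp.toLp 2 fun j => (z j : ℝ), fun j => ⟨z j, rfl⟩,
    EuclideanSpace.norm_le_norm_of_abs_le fun j => (hz j).1, ?_⟩
  simpa using EuclideanSpace.dist_le_sqrt_card fun j => (hz j).2

lemma exists_isIntegerPoint_norm_ge (p : 𝔼) :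
    ∃ q, IsIntegerPoint q ∧ ‖p‖ ≤ ‖q‖ ∧ dist p q ≤ √d := by
  choose z hz using fun j => exists_int_abs_ge_abs_sub_le_one (p j)
  refine ⟨WithLp.toLp 2 fun j => (z j : ℝ), fun j => ⟨z j, rfl⟩,
    EuclideanSpace.norm_le_norm_of_abs_le fun j => (hz j).1, ?_⟩
  simpa using EuclideanSpace.dist_le_sqrt_card fun j => (hz j).2

lemma exists_isIntegerPoint_mem_shell_dist_le {k : ℕ} (hd : 2 * √d ≤ 2 ^ k) {p : 𝔼}
    (hp : p ∈ 𝕊 (k + 1)) : ∃ q, IsIntegerPoint q ∧ q ∈ 𝕊 (k + 1) ∧ dist p q ≤ √d := by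
  rw [mem_shell_succ] at hp
  have hpow : (2 : ℝ) ^ (k + 1) = 2 ^ k + 2 ^ k := by ring
  -- the shell is thicker than `2 √d`: round away from `0` near the inner sphere, towards `0`
  -- elsewhere
  rcases lt_or_ge (‖p‖ + √d) (2 ^ (k + 1)) with hin | hout
  · obtain ⟨q, hqi, hpq, hdist⟩ := exists_isIntegerPoint_norm_ge p
    have := norm_le_norm_add_norm_sub' q p
    rw [← dist_eq_norm, dist_comm] at this
    exact ⟨q, hqi, mem_shell_succ.2 ⟨hp.1.trans hpq, by linarith⟩, hdist⟩
  · obtain ⟨q, hqi, hqp, hdist⟩ := exists_isIntegerPoint_norm_le p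
    have := norm_le_norm_add_norm_sub' p q
    rw [← dist_eq_norm] at this
    exact ⟨q, hqi, mem_shell_succ.2 ⟨by linarith, hqp.trans_lt hp.2⟩, hdist⟩

lemma finite_setOf_isIntegerPoint_norm_lt (R : ℝ) :
    {q : 𝔼 | IsIntegerPoint q ∧ ‖q‖ < R}.Finite := by
  refine ((Set.finite_Icc (fun _ => -⌈R⌉ : Fin d → ℤ) fun _ => ⌈R⌉).image
    fun g => WithLp.toLp 2 fun j => (g j : ℝ)).subset ?_
  rintro q ⟨hqi, hqR⟩
  choose g hg using hqi
  have hgR : ∀ j, |g j| ≤ ⌈R⌉ := fun j => by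
    have : |(g j : ℝ)| ≤ R := hg j ▸ (PiLp.norm_apply_le q j).trans hqR.le
    exact_mod_cast this.trans (Int.le_ceil R)
  refine ⟨g, ⟨fun j => (abs_le.1 (hgR j)).1, fun j => (abs_le.1 (hgR j)).2⟩, ?_⟩
  · ext j
    simp [hg j]

lemma exists_finset_isIntegerPoint_cover {k : ℕ} (hd : 2 * √d ≤ 2 ^ k) :
    ∃ T : Finset 𝔼, (∀ q ∈ T, q ∈ 𝕊 (k + 1) ∧ IsIntegerPoint q) ∧
      𝕊 (k + 1) ⊆ ⋃ q ∈ T, ball q ((d + 1 : ℕ) : ℝ) := by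
  have hfin : {q : 𝔼 | q ∈ 𝕊 (k + 1) ∧ IsIntegerPoint q}.Finite :=
    (finite_setOf_isIntegerPoint_norm_lt (2 ^ (k + 1))).subset fun q hq =>
      ⟨hq.2, norm_lt_of_mem_shell hq.1⟩
  refine ⟨hfin.toFinset, fun q hq => hfin.mem_toFinset.1 hq, fun p hp => ?_⟩
  obtain ⟨q, hqi, hq, hpq⟩ := exists_isIntegerPoint_mem_shell_dist_le hd hp
  have hsqrt : √d < d + 1 := (Real.sqrt_lt' (by positivity)).2 (by nlinarith)
  exact mem_iUnion₂.2 ⟨q, hfin.mem_toFinset.2 ⟨hq, hqi⟩, mem_ball.2 (by push_cast; linarith)⟩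

lemma exists_subset_nuP_mem_Icc_of_cover {R : ℕ} (hR : 1 ≤ R) {T : Finset 𝔼}
    (hT : ∀ q ∈ T, q ∈ 𝕊 n ∧ IsIntegerPoint q) (hcov : 𝕊 n ⊆ ⋃ q ∈ T, ball q R)
    {lam : ℝ≥0∞} (hlam : lam ≤ nuP s n E) : ∃ G ⊆ E ∩ 𝕊 n,
      lam ≤ nuP s n G ∧ nuP s n G ≤ lam + ENNReal.ofReal ((R / 2 ^ n) ^ s) := by
  classical
  -- add the balls of the cover one at a time until `ν_n^s` first reaches `lam`
  let P : Finset 𝔼 → Set 𝔼 := fun T' => E ∩ 𝕊 n ∩ ⋃ q ∈ T', ball q R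
  suffices h : ∀ T' ⊆ T, lam ≤ nuP s n (P T') → ∃ G ⊆ E ∩ 𝕊 n,
      lam ≤ nuP s n G ∧ nuP s n G ≤ lam + ENNReal.ofReal ((R / 2 ^ n) ^ s) by
    refine h T subset_rfl ?_
    rwa [show P T = E ∩ 𝕊 n from inter_eq_left.2 (inter_subset_right.trans hcov), nuP_inter_shell]
  intro T'
  induction T' using Finset.induction_on with
  | empty =>
    intro _ h
    refine ⟨∅, empty_subset _, ?_, ?_⟩ <;> simp_all [P, nuP_empty]
  | insert q T' _ ih =>
    intro hsub hlam'
    by_cases h : lam ≤ nuP s n (P T')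
    · exact ih ((Finset.subset_insert _ _).trans hsub) h
    refine ⟨P (insert q T'), inter_subset_left, hlam', ?_⟩
    obtain ⟨hqs, hqi⟩ := hT q (hsub (Finset.mem_insert_self _ _))
    have hP : P (insert q T') ⊆ P T' ∪ ball q R := by
      rintro x ⟨hxE, hx⟩
      rw [Finset.set_biUnion_insert] at hx
      rcases hx with hx | hx
      exacts [Or.inr hx, Or.inl ⟨hxE, hx⟩]
    calc nuP s n (P (insert q T')) ≤ nuP s n (P T' ∪ ball q R) := nuP_mono hP
      _ ≤ nuP s n (P T') + ENNReal.ofReal ((R / 2 ^ n) ^ s) := nuP_union_ball_le hqs hqi hR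
      _ ≤ lam + ENNReal.ofReal ((R / 2 ^ n) ^ s) := by gcongr; exact (not_le.1 h).le

lemma exists_subset_nuP_mem_Icc {k : ℕ} (hd : 2 * √d ≤ 2 ^ k) {lam : ℝ≥0∞}
    (hlam : lam ≤ nuP s (k + 1) E) : ∃ G ⊆ E ∩ 𝕊 (k + 1), lam ≤ nuP s (k + 1) G ∧
      nuP s (k + 1) G ≤ lam + ENNReal.ofReal (((d + 1) / 2 ^ (k + 1)) ^ s) := by
  obtain ⟨T, hT, hcov⟩ := exists_finset_isIntegerPoint_cover hd
  simpa using exists_subset_nuP_mem_Icc_of_cover (Nat.le_add_left 1 d) hT hcov hlam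

lemma nuP_iUnion_of_subset_shell {ι : Type*} {G : ι → Set 𝔼} {idx : ι → ℕ}
    (hidx : Function.Injective idx) (hG : ∀ i, G i ⊆ 𝕊 (idx i)) (t : ℝ) (i : ι) :
    nuP t (idx i) (⋃ j, G j) = nuP t (idx i) (G i) := by
  rw [← nuP_inter_shell, ← nuP_inter_shell (A := G i)]
  congr 1
  ext x
  simp only [mem_inter_iff, mem_iUnion]
  refine ⟨fun ⟨⟨j, hj⟩, hx⟩ => ?_, fun ⟨hx, hs⟩ => ⟨⟨i, hx⟩, hs⟩⟩
  obtain rfl : j = i := hidx <| by_contra fun h =>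
    Set.disjoint_left.1 (pairwise_disjoint_shell h) (hG j hj) hx
  exact ⟨hj, hx⟩

theorem exists_subset_tsum_nuP_ne_top (hs : 0 < s) (h : ∑' n, nuP s n E = ⊤) :
    ∃ F ⊆ E, ∑' n, nuP s n F ≠ ⊤ ∧ ∀ t, 0 ≤ t → t < s → ∑' n, nuP t n F = ⊤ := by
  -- beyond shell `k₀` every point is within `√d` of an integer point of its own shell
  obtain ⟨k₀, hk₀⟩ : ∃ k₀ : ℕ, 2 * √d ≤ 2 ^ k₀ :=
    (pow_unbounded_of_one_lt (2 * √d) one_lt_two).imp fun _ => le_of_lt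
  have hd : ∀ n, 2 * √d ≤ 2 ^ (n + k₀) := fun n =>
    hk₀.trans (pow_le_pow_right₀ one_le_two (Nat.le_add_left _ _))
  have htail : ∑' n, nuP s (n + k₀ + 1) E = ⊤ := by
    by_contra hne
    exact (tsum_nat_add_ne_top_iff (nuP_ne_top s · E) (k₀ + 1)).1 (by simpa [add_assoc] using hne) h
  obtain ⟨l, hla, hl1, hl, hlθ⟩ :=
    exists_le_tsum_ne_top_tsum_rpow_eq_top (fun n => nuP_ne_top _ _ _) htail
  choose G hGE hlG hGl using fun n => exists_subset_nuP_mem_Icc (hd n) (hla n)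
  have hidx : Function.Injective fun n => n + k₀ + 1 := fun _ _ h => by simpa using h
  have hF := nuP_iUnion_of_subset_shell hidx fun n => (hGE n).trans inter_subset_right
  refine ⟨⋃ n, G n, iUnion_subset fun n => (hGE n).trans inter_subset_left, ?_, fun t ht hts => ?_⟩
  · rw [← tsum_nat_add_ne_top_iff (nuP_ne_top s · _) (k₀ + 1)]
    simp only [← add_assoc, hF]
    refine ne_top_of_le_ne_top ?_ (ENNReal.tsum_le_tsum hGl)
    rw [ENNReal.tsum_add, ENNReal.add_ne_top]
    refine ⟨hl, ?_⟩
    simpa [add_assoc] using (tsum_nat_add_ne_top_iff (fun _ => ENNReal.ofReal_ne_top) (k₀ + 1)).2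
      (tsum_ofReal_div_two_pow_rpow_ne_top (R := d + 1) (by positivity) hs)
  · obtain ⟨θ, hθ0, hθ1, hθ⟩ := exists_rpow_le_nuP ht hts
    rw [eq_top_iff, ← hlθ θ hθ0 hθ1]
    calc ∑' n, l n ^ θ ≤ ∑' n, nuP t (n + k₀ + 1) (⋃ n, G n) :=
          ENNReal.tsum_le_tsum fun n => (hF t n).symm ▸ hθ _ _ _ (hl1 n) (hlG n)
      _ ≤ ∑' n, nuP t n (⋃ n, G n) := ENNReal.tsum_comp_le_tsum_of_injective hidx _

end Macroscopic

/-- Existence of macroscopic `s`-sets: if `ν^s(E) = ∞` then `E` contains a subset `F`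
with macroscopic Hausdorff dimension `s` and `ν^s(F) < ∞`. -/
theorem stmt11 (d : ℕ) (s : ℝ) (hs : 0 ≤ s) (E : Set (EuclideanSpace ℝ (Fin d)))
    (h : ∑' n, nuP s n E = ⊤) :
    ∃ F ⊆ E, sInf { t : ℝ | 0 ≤ t ∧ ∑' n, nuP t n F < ⊤ } = s ∧
      ∑' n, nuP s n F < ⊤ := by
  rcases hs.eq_or_lt with rfl | hs
  · refine ⟨∅, empty_subset E, IsLeast.csInf_eq ⟨⟨le_rfl, ?_⟩, fun t ht => ht.1⟩, ?_⟩ <;>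
      simp [Macroscopic.nuP_empty]
  obtain ⟨F, hFE, hfin, hdiv⟩ := Macroscopic.exists_subset_tsum_nuP_ne_top hs h
  refine ⟨F, hFE, IsLeast.csInf_eq ⟨⟨hs.le, hfin.lt_top⟩, fun t ⟨ht, htF⟩ => ?_⟩, hfin.lt_top⟩
  by_contra! hts
  exact htF.ne (hdiv t ht hts)
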